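/- arXiv:2110.10676 — 5 statements merged into one kernel-verified Lean document; each statement's English description precedes it below -/
import Mathlib

section
/- Let X be a finite connected poset and φ: I(X,ℤ₂) → I(X,ℤ₂) a bijective additive map. Then φ preserves idempotents if and only if φ is a composition of a bijective shift map and a Lie automorphism of I(X,ℤ₂). -/
/-!
Over `ℤ₂` the bracket `⁅f, g⁆ = f g + g f` is the polarization of `f ↦ f² - f`, whose zeros are
the idempotents. Hence if an additive `φ` preserves idempotents, then `⁅φ u, φ a⁆ = φ(a)² - φ(a)`
whenever `u` and `u + a` are idempotent. Feeding in suitable sums of matrix units shows that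
`⁅φ b, φ b'⁆ = φ(c)² - φ(c)` with `c = ⁅b, b'⁆` for all matrix units `b, b'`; such a `c` squares to
zero, which makes `φ(c)²` central. By additivity `φ ⁅f, g⁆ - ⁅φ f, φ g⁆` is central for all
`f, g`, i.e. a scalar when `X` is connected, and subtracting a suitable scalar-valued additive
functional from `φ` gives a Lie automorphism `ψ` with `φ - ψ` central; then `φ = τ ∘ ψ` with the
shift `τ = φ ∘ ψ⁻¹`.

Conversely, a Lie automorphism `ψ` sends an idempotent `f` to an element with `ψ(f)² - ψ(f)`
central. Central elements of `I(X, ℤ₂)` are diagonal while `g² - g` has zero diagonal, so `ψ(f)` is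
idempotent, and adding a central (hence idempotent) element keeps it idempotent.
-/

open IncidenceAlgebra

/-- A poset is connected if any two elements can be joined by a sequence of elements
in which consecutive elements are comparable. -/
def PosetConnected (X : Type*) [PartialOrder X] : Prop :=
  ∀ x y : X, Relation.ReflTransGen (fun a b : X => a ≤ b ∨ b ≤ a) x y

attribute [local instance] LieRing.ofAssociativeRing

theorem ZMod.eq_zero_or_eq_one (c : ZMod 2) : c = 0 ∨ c = 1 := by
  revert c
  decide

theorem exists_isIdempotentElem_map_eq {R : Type*} [Mul R] [Finite R] {φ : R → R}
    (hφ : Function.Injective φ) (hE : ∀ f, IsIdempotentElem f → IsIdempotentElem (φ f))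
    {e : R} (he : IsIdempotentElem e) : ∃ p, IsIdempotentElem p ∧ φ p = e :=
  ((Set.toFinite {f : R | IsIdempotentElem f}).injOn_iff_bijOn_of_mapsTo hE |>.1
    hφ.injOn).surjOn he

section Ring

variable {R : Type*} [Ring R]

def idemDefect (f : R) : R := f * f - f

theorem idemDefect_eq_zero {f : R} : idemDefect f = 0 ↔ IsIdempotentElem f := sub_eq_zero

@[simp]
theorem idemDefect_zero : idemDefect (0 : R) = 0 := by simp [idemDefect]

theorem idemDefect_mem_center {z : R} (hz : z ∈ Set.center R) : idemDefect z ∈ Set.center R := by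
  rw [idemDefect, sub_eq_add_neg]
  exact Set.add_mem_center (Set.mul_mem_center hz hz) (Set.neg_mem_center hz)

theorem mem_center_of_lie_eq_zero {z : R} (h : ∀ g : R, ⁅z, g⁆ = 0) : z ∈ Set.center R :=
  Semigroup.mem_center_iff.2 fun g => (commute_iff_lie_eq.2 (h g)).eq.symm

theorem lie_eq_zero_of_mem_center {z : R} (hz : z ∈ Set.center R) (g : R) : ⁅z, g⁆ = 0 :=
  commute_iff_lie_eq.1 (Semigroup.mem_center_iff.1 hz g).symm

theorem mem_center_of_lie_map_eq_zero {φ : R →+ R} {S : Set R}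
    (hS : AddSubmonoid.closure S = ⊤) (hφ : Function.Surjective φ) {z : R}
    (h : ∀ b ∈ S, ⁅z, φ b⁆ = 0) : z ∈ Set.center R := by
  refine mem_center_of_lie_eq_zero fun g => ?_
  obtain ⟨f, rfl⟩ := hφ g
  induction f using AddSubmonoid.dense_induction S hS with
  | mem b hb => exact h b hb
  | zero => rw [map_zero, lie_zero]
  | add f f' hf hf' => rw [map_add, lie_add, hf, hf', add_zero]

theorem exists_shift_comp {φ ψ : R →+ R} (hφ : Function.Bijective φ)
    (hψ : Function.Bijective ψ) (h : ∀ f, φ f - ψ f ∈ Set.center R) :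
    ∃ τ : R →+ R, Function.Bijective τ ∧ (∀ f, τ f - f ∈ Set.center R) ∧ ⇑φ = τ ∘ ψ := by
  let e := AddEquiv.ofBijective ψ hψ
  refine ⟨φ.comp e.symm.toAddMonoidHom, hφ.comp e.symm.bijective, fun f => ?_, ?_⟩
  · simpa [e] using h (e.symm f)
  · funext f
    exact congrArg φ (e.symm_apply_apply f).symm

end Ring

section ZModTwoAlgebra

variable {R : Type*} [Ring R] [Algebra (ZMod 2) R]

theorem add_self_eq_zero_of_zmod_two (x : R) : x + x = 0 := by
  rw [← two_mul, ← map_ofNat (algebraMap (ZMod 2) R) 2]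
  simp [show (2 : ZMod 2) = 0 from rfl]

theorem neg_eq_self_of_zmod_two (x : R) : -x = x :=
  neg_eq_of_add_eq_zero_left (add_self_eq_zero_of_zmod_two x)

theorem lie_eq_mul_add_mul (f g : R) : ⁅f, g⁆ = f * g + g * f := by
  rw [Ring.lie_def, sub_eq_add_neg, neg_eq_self_of_zmod_two]

theorem lie_comm_of_zmod_two (f g : R) : ⁅f, g⁆ = ⁅g, f⁆ := by
  rw [← lie_skew g f, neg_eq_self_of_zmod_two]

theorem lie_mul_self_left (f g : R) : ⁅f * f, g⁆ = ⁅f, ⁅f, g⁆⁆ := by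
  have h := add_self_eq_zero_of_zmod_two (f * g * f)
  simp only [lie_eq_mul_add_mul, mul_add, add_mul, mul_assoc] at h ⊢
  rw [← sub_eq_zero]
  calc _ = -(f * (g * f) + f * (g * f)) := by noncomm_ring
    _ = 0 := by rw [h, neg_zero]

theorem idemDefect_add (f g : R) :
    idemDefect (f + g) = idemDefect f + idemDefect g + ⁅f, g⁆ := by
  simp only [idemDefect, lie_eq_mul_add_mul]
  noncomm_ring

theorem IsIdempotentElem.add_of_lie_eq_self {u a : R} (hu : IsIdempotentElem u)
    (ha : a * a = 0) (hua : ⁅u, a⁆ = a) : IsIdempotentElem (u + a) := by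
  rw [← idemDefect_eq_zero, idemDefect_add, idemDefect_eq_zero.2 hu, hua, idemDefect, ha]
  simp

theorem IsIdempotentElem.add_of_lie_eq_zero {u v : R} (hu : IsIdempotentElem u)
    (hv : IsIdempotentElem v) (huv : ⁅u, v⁆ = 0) : IsIdempotentElem (u + v) := by
  rw [← idemDefect_eq_zero, idemDefect_add, idemDefect_eq_zero.2 hu, idemDefect_eq_zero.2 hv,
    huv, add_zero, add_zero]

theorem lie_map_eq_idemDefect {φ : R →+ R}
    (hφ : ∀ f, IsIdempotentElem f → IsIdempotentElem (φ f)) {u a : R}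
    (hu : IsIdempotentElem u) (hua : IsIdempotentElem (u + a)) :
    ⁅φ u, φ a⁆ = idemDefect (φ a) := by
  have h := idemDefect_eq_zero.2 (hφ _ hua)
  rw [map_add, idemDefect_add, idemDefect_eq_zero.2 (hφ u hu), zero_add] at h
  rw [eq_neg_of_add_eq_zero_right h, neg_eq_self_of_zmod_two]

section Spanning

variable {φ : R →+ R} {S : Set R} (hS : AddSubmonoid.closure S = ⊤)
  (hφ : Function.Surjective φ) (hSlie : ∀ b ∈ S, ∀ b' ∈ S, ⁅b, b'⁆ ∈ S)
  (hφS : ∀ b ∈ S, ∀ b' ∈ S, ⁅φ b, φ b'⁆ = idemDefect (φ ⁅b, b'⁆))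
include hS hφ hSlie hφS

theorem mul_self_map_mem_center {c : R} (hc : c ∈ S) (hcc : c * c = 0) :
    φ c * φ c ∈ Set.center R := by
  refine mem_center_of_lie_map_eq_zero hS hφ fun b hb => ?_
  have hcd : ⁅φ c, φ ⁅c, b⁆⁆ = 0 := by
    rw [hφS c hc _ (hSlie c hc b hb), ← lie_mul_self_left, hcc, zero_lie, map_zero,
      idemDefect_zero]
  rw [lie_mul_self_left, hφS c hc b hb, idemDefect, lie_sub, hcd, sub_zero,
    lie_comm_of_zmod_two, lie_mul_self_left, lie_comm_of_zmod_two _ (φ c), hcd, lie_zero]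

theorem map_lie_sub_lie_mem_center (hSnil : ∀ b ∈ S, ∀ b' ∈ S, ⁅b, b'⁆ * ⁅b, b'⁆ = 0)
    (f g : R) : φ ⁅f, g⁆ - ⁅φ f, φ g⁆ ∈ Set.center R := by
  induction f using AddSubmonoid.dense_induction S hS generalizing g with
  | mem b hb =>
    induction g using AddSubmonoid.dense_induction S hS with
    | mem b' hb' =>
      rw [hφS b hb b' hb', idemDefect, sub_sub_eq_add_sub, add_self_eq_zero_of_zmod_two,
        zero_sub]
      exact Set.neg_mem_center (mul_self_map_mem_center hS hφ hSlie hφS (hSlie b hb b' hb')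
        (hSnil b hb b' hb'))
    | zero => simp
    | add g g' hg hg' =>
      convert Set.add_mem_center hg hg' using 1
      simp only [lie_add, map_add]
      abel
  | zero => simp
  | add f f' hf hf' =>
    convert Set.add_mem_center (hf g) (hf' g) using 1
    simp only [add_lie, map_add]
    abel

end Spanning

theorem idemDefect_map_mem_center_of_lie {ψ : R → R} (hψ : Function.Surjective ψ)
    (hψlie : ∀ f g, ψ ⁅f, g⁆ = ⁅ψ f, ψ g⁆) {f : R} (hf : IsIdempotentElem f) :
    idemDefect (ψ f) ∈ Set.center R := by
  refine mem_center_of_lie_eq_zero fun g => ?_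
  obtain ⟨g, rfl⟩ := hψ g
  rw [idemDefect, sub_lie, lie_mul_self_left, ← hψlie, ← hψlie, ← lie_mul_self_left, hf.eq,
    sub_self]

theorem IsIdempotentElem.shift_comp_lie
    (hR : ∀ f : R, idemDefect f ∈ Set.center R → idemDefect f = 0) {τ ψ : R → R}
    (hτ : ∀ f, τ f - f ∈ Set.center R) (hψ : Function.Surjective ψ)
    (hψlie : ∀ f g, ψ ⁅f, g⁆ = ⁅ψ f, ψ g⁆) {f : R} (hf : IsIdempotentElem f) :
    IsIdempotentElem (τ (ψ f)) := by
  obtain ⟨z, hz, hτψ⟩ : ∃ z ∈ Set.center R, τ (ψ f) = ψ f + z :=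
    ⟨_, hτ (ψ f), (add_sub_cancel _ _).symm⟩
  rw [hτψ, ← idemDefect_eq_zero, idemDefect_add,
    hR _ (idemDefect_map_mem_center_of_lie hψ hψlie hf), hR _ (idemDefect_mem_center hz),
    lie_comm_of_zmod_two, lie_eq_zero_of_mem_center hz, add_zero, add_zero]

end ZModTwoAlgebra

section LieCorrection

variable {K R : Type*} [CommRing K] [Ring R] [Algebra K R]

-- Subtracting the scalar `ℓ (φ f)` removes the central defect of `φ` on commutators (which `ℓ`
-- kills); the `ℓ f` term makes `ℓ ∘ ψ = ℓ`, which is what injectivity needs.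
def lieCorrection (φ : R →+ R) (ℓ : R →+ K) : R →+ R :=
  φ - (algebraMap K R).toAddMonoidHom.comp (ℓ.comp φ - ℓ)

variable {φ : R →+ R} {ℓ : R →+ K}

theorem lieCorrection_apply (f : R) :
    lieCorrection φ ℓ f = φ f - algebraMap K R (ℓ (φ f) - ℓ f) := rfl

theorem sub_lieCorrection_mem_center (f : R) : φ f - lieCorrection φ ℓ f ∈ Set.center R := by
  rw [lieCorrection_apply, sub_sub_cancel]
  exact Set.algebraMap_mem_center _

theorem lieCorrection_lie (hℓ : ∀ f g : R, ℓ ⁅f, g⁆ = 0)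
    (hcenter : ∀ z ∈ Set.center R, z = algebraMap K R (ℓ z))
    (hφ : ∀ f g, φ ⁅f, g⁆ - ⁅φ f, φ g⁆ ∈ Set.center R) (f g : R) :
    lieCorrection φ ℓ ⁅f, g⁆ = ⁅lieCorrection φ ℓ f, lieCorrection φ ℓ g⁆ := by
  have hdefect := hcenter _ (hφ f g)
  rw [map_sub, hℓ (φ f), sub_zero] at hdefect
  have hscalar (c : K) (x : R) : ⁅x, algebraMap K R c⁆ = 0 := by
    rw [← lie_skew, lie_eq_zero_of_mem_center (Set.algebraMap_mem_center c), neg_zero]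
  rw [lieCorrection_apply, hℓ, sub_zero, ← hdefect, sub_sub_cancel, lieCorrection_apply,
    lieCorrection_apply, sub_lie, lie_sub, lie_sub, hscalar, hscalar,
    lie_eq_zero_of_mem_center (Set.algebraMap_mem_center _), sub_zero, sub_zero, sub_zero]

theorem lieCorrection_injective (hφ : Function.Injective φ)
    (hℓ : ∀ c, ℓ (algebraMap K R c) = c) (hφℓ : ∀ f c, φ f = algebraMap K R c → ℓ f = c) :
    Function.Injective (lieCorrection φ ℓ) := by
  refine (injective_iff_map_eq_zero _).2 fun f hf => ?_
  rw [lieCorrection_apply, sub_eq_zero] at hf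
  have hℓf : ℓ f = 0 := by
    have h := congrArg ℓ hf
    rw [hℓ] at h
    exact sub_eq_self.1 h.symm
  have hφf := hφℓ f _ hf
  rw [hℓf, eq_comm, sub_eq_zero] at hφf
  rw [hφf, hℓf, sub_zero, map_zero, ← map_zero φ] at hf
  exact hφ hf

end LieCorrection

namespace IncidenceAlgebra

section General

variable {𝕜 X : Type*} [PartialOrder X] {x y u v a b : X}

instance [Zero 𝕜] [Finite 𝕜] [Finite X] : Finite (IncidenceAlgebra 𝕜 X) :=
  Finite.of_injective _ DFunLike.coe_injective

def applyAddMonoidHom [AddMonoid 𝕜] (a b : X) : IncidenceAlgebra 𝕜 X →+ 𝕜 :=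
  ⟨⟨fun f => f a b, rfl⟩, fun _ _ => rfl⟩

theorem sum_apply {ι : Type*} [AddCommMonoid 𝕜] (s : Finset ι) (f : ι → IncidenceAlgebra 𝕜 X)
    (a b : X) : (∑ i ∈ s, f i) a b = ∑ i ∈ s, f i a b :=
  map_sum (applyAddMonoidHom a b) f s

-- The matrix unit `e_xy` of the paper; it is `0` unless `x ≤ y`.
open Classical in
noncomputable def single (𝕜 : Type*) [Zero 𝕜] [One 𝕜] (x y : X) : IncidenceAlgebra 𝕜 X :=
  ⟨fun a b => if a = x ∧ b = y ∧ x ≤ y then 1 else 0, fun a b hab => by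
    rw [if_neg]
    rintro ⟨rfl, rfl, h⟩
    exact hab h⟩

theorem single_apply [DecidableEq X] [Zero 𝕜] [One 𝕜] (h : x ≤ y) (a b : X) :
    single 𝕜 x y a b = if a = x ∧ b = y then 1 else 0 := by
  simp [single, h]

-- `0` is included so that the set is closed under brackets.
variable (X) in
def matrixUnits (𝕜 : Type*) [Zero 𝕜] [One 𝕜] : Set (IncidenceAlgebra 𝕜 X) :=
  insert 0 {f | ∃ x y, x ≤ y ∧ single 𝕜 x y = f}

theorem closure_matrixUnits [DecidableEq X] [Fintype X] :
    AddSubmonoid.closure (matrixUnits X (ZMod 2)) = ⊤ := by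
  refine eq_top_iff.2 fun f _ => ?_
  have hsum : f = ∑ p ∈ Finset.univ.filter (fun p : X × X => f p.1 p.2 ≠ 0),
      single (ZMod 2) p.1 p.2 := by
    ext a b hab
    rw [sum_apply, Finset.sum_filter, Finset.sum_eq_single (a, b)]
    · obtain h | h := ZMod.eq_zero_or_eq_one (f a b) <;> simp [h, single_apply hab]
    · rintro ⟨c, d⟩ - hne
      split_ifs with hcd
      · rw [single_apply (le_of_ne_zero hcd), if_neg fun h => hne (by rw [h.1, h.2])]
      · rfl
    · simp
  rw [hsum]
  refine AddSubmonoid.sum_mem _ fun p hp => AddSubmonoid.subset_closure ?_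
  exact Or.inr ⟨p.1, p.2, le_of_ne_zero (Finset.mem_filter.1 hp).2, rfl⟩

variable [LocallyFiniteOrder X]

theorem mul_apply_self [Semiring 𝕜] (f g : IncidenceAlgebra 𝕜 X) (a : X) :
    (f * g) a a = f a a * g a a := by
  rw [mul_apply, Finset.Icc_self, Finset.sum_singleton]

theorem exists_apply_self_ne_zero_of_isIdempotentElem [Semiring 𝕜]
    {p : IncidenceAlgebra 𝕜 X} (hp : IsIdempotentElem p) (hp0 : p ≠ 0) : ∃ x, p x x ≠ 0 := by
  by_contra! hdiag
  -- In `p a b = ∑ t, p a t * p t b` each term has a diagonal factor or lives on a shorter interval.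
  suffices h : ∀ n a b, (Finset.Icc a b).card = n → p a b = 0 from
    hp0 (ext fun a b _ => h _ a b rfl)
  intro n
  induction n using Nat.strong_induction_on with
  | _ n ih =>
    intro a b hn
    rw [← hp.eq, mul_apply]
    refine Finset.sum_eq_zero fun t ht => ?_
    obtain ⟨hat, htb⟩ := Finset.mem_Icc.1 ht
    obtain rfl | hat := hat.eq_or_lt
    · rw [hdiag, zero_mul]
    obtain rfl | htb := htb.eq_or_lt
    · rw [hdiag, mul_zero]
    rw [ih _ (hn ▸ Finset.card_lt_card (Finset.Icc_ssubset_Icc_right (hat.trans htb).le le_rfl htb))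
      a t rfl, zero_mul]

variable [DecidableEq X]

theorem lie_apply_self [CommRing 𝕜] (f g : IncidenceAlgebra 𝕜 X) (a : X) : ⁅f, g⁆ a a = 0 := by
  rw [Ring.lie_def, sub_apply, mul_apply_self, mul_apply_self, mul_comm, sub_self]

section Semiring

variable [Semiring 𝕜]

theorem single_mul_single (hxy : x ≤ y) (huv : u ≤ v) :
    single 𝕜 x y * single 𝕜 u v = if y = u then single 𝕜 x v else 0 := by
  ext a b hab
  rw [mul_apply]
  split_ifs with hyu
  · subst hyu
    rw [single_apply (hxy.trans huv), Finset.sum_eq_single y]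
    · simp only [single_apply hxy, single_apply huv]
      split_ifs <;> simp_all
    · intro t _ hty
      simp [single_apply huv, hty]
    · intro hy
      rw [single_apply hxy, single_apply huv]
      split_ifs with h1 h2 <;> simp_all [Finset.mem_Icc]
  · refine Finset.sum_eq_zero fun t _ => ?_
    rw [single_apply hxy, single_apply huv]
    split_ifs with h1 h2 <;> simp_all

variable (𝕜) in
theorem isIdempotentElem_single_self (x : X) : IsIdempotentElem (single 𝕜 x x) := by
  rw [IsIdempotentElem, single_mul_single le_rfl le_rfl, if_pos rfl]

variable (𝕜) in
theorem single_mul_self (hxy : x < y) : single 𝕜 x y * single 𝕜 x y = 0 := by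
  rw [single_mul_single hxy.le hxy.le, if_neg hxy.ne']

theorem mul_single_apply (f : IncidenceAlgebra 𝕜 X) (hxy : x ≤ y) (a b : X) :
    (f * single 𝕜 x y) a b = if b = y then f a x else 0 := by
  rw [mul_apply]
  split_ifs with hby
  · subst hby
    by_cases hax : a ≤ x
    · rw [Finset.sum_eq_single x]
      · simp [single_apply hxy]
      · intro t _ htx
        simp [single_apply hxy, htx]
      · simp [hax, hxy]
    · rw [apply_eq_zero_of_not_le hax]
      refine Finset.sum_eq_zero fun t ht => ?_
      rw [single_apply hxy]
      split_ifs with h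
      · exact absurd (h.1 ▸ (Finset.mem_Icc.1 ht).1) hax
      · rw [mul_zero]
  · refine Finset.sum_eq_zero fun t _ => ?_
    simp [single_apply hxy, hby]

theorem single_mul_apply (f : IncidenceAlgebra 𝕜 X) (hxy : x ≤ y) (a b : X) :
    (single 𝕜 x y * f) a b = if a = x then f y b else 0 := by
  rw [mul_apply]
  split_ifs with hax
  · subst hax
    by_cases hyb : y ≤ b
    · rw [Finset.sum_eq_single y]
      · simp [single_apply hxy]
      · intro t _ hty
        simp [single_apply hxy, hty]
      · simp [hyb, hxy]
    · rw [apply_eq_zero_of_not_le hyb]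
      refine Finset.sum_eq_zero fun t ht => ?_
      rw [single_apply hxy]
      split_ifs with h
      · exact absurd (h.2 ▸ (Finset.mem_Icc.1 ht).2) hyb
      · rw [zero_mul]
  · refine Finset.sum_eq_zero fun t _ => ?_
    simp [single_apply hxy, hax]

theorem apply_eq_zero_of_mem_center {z : IncidenceAlgebra 𝕜 X} (hz : z ∈ Set.center _)
    (hab : a ≠ b) : z a b = 0 := by
  have h := congrArg (fun f : IncidenceAlgebra 𝕜 X => f a b)
    (Semigroup.mem_center_iff.1 hz (single 𝕜 b b))
  rw [mul_single_apply _ le_rfl, single_mul_apply _ le_rfl, if_pos rfl, if_neg hab] at h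
  exact h.symm

theorem apply_self_eq_of_mem_center {z : IncidenceAlgebra 𝕜 X} (hz : z ∈ Set.center _)
    (hab : a ≤ b) : z a a = z b b := by
  have h := congrArg (fun f : IncidenceAlgebra 𝕜 X => f a b)
    (Semigroup.mem_center_iff.1 hz (single 𝕜 a b))
  rwa [mul_single_apply _ hab, single_mul_apply _ hab, if_pos rfl, if_pos rfl, eq_comm] at h

end Semiring

theorem algebraMap_apply [CommSemiring 𝕜] (c : 𝕜) (a b : X) :
    algebraMap 𝕜 (IncidenceAlgebra 𝕜 X) c a b = if a = b then c else 0 := by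
  simp [Algebra.algebraMap_eq_smul_one, constSMul_apply]

theorem eq_algebraMap_of_mem_center [CommSemiring 𝕜] (hX : PosetConnected X)
    {z : IncidenceAlgebra 𝕜 X} (hz : z ∈ Set.center _) (x₀ : X) :
    z = algebraMap 𝕜 _ (z x₀ x₀) := by
  have hdiag (a : X) : z a a = z x₀ x₀ := by
    induction hX x₀ a with
    | refl => rfl
    | tail _ hab ih =>
      rw [← ih]
      rcases hab with hab | hab
      · exact (apply_self_eq_of_mem_center hz hab).symm
      · exact apply_self_eq_of_mem_center hz hab
  ext a b _
  rw [algebraMap_apply]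
  split_ifs with hab
  · rw [hab, hdiag]
  · exact apply_eq_zero_of_mem_center hz hab

end General

variable {X : Type*} [PartialOrder X] [LocallyFiniteOrder X] [DecidableEq X] {x y u v z : X}

theorem idemDefect_eq_zero_of_mem_center {f : IncidenceAlgebra (ZMod 2) X}
    (hf : idemDefect f ∈ Set.center _) : idemDefect f = 0 := by
  ext a b _
  obtain rfl | hab := eq_or_ne a b
  · rw [idemDefect, sub_apply, mul_apply_self, zero_apply]
    obtain h | h := ZMod.eq_zero_or_eq_one (f a a) <;> simp [h]
  · exact apply_eq_zero_of_mem_center hf hab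

theorem lie_single_single (hxy : x ≤ y) (huv : u ≤ v) :
    ⁅single (ZMod 2) x y, single (ZMod 2) u v⁆ =
      (if y = u then single (ZMod 2) x v else 0) + (if v = x then single (ZMod 2) u y else 0) := by
  rw [lie_eq_mul_add_mul, single_mul_single hxy huv, single_mul_single huv hxy]

theorem lie_single_single_eq_zero_or (hxy : x ≤ y) (huv : u ≤ v) :
    ⁅single (ZMod 2) x y, single (ZMod 2) u v⁆ = 0 ∨
      ∃ a c, a < c ∧ ⁅single (ZMod 2) x y, single (ZMod 2) u v⁆ = single (ZMod 2) a c := by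
  rw [lie_single_single hxy huv]
  by_cases hyu : y = u <;> by_cases hvx : v = x
  · subst hyu hvx
    obtain rfl := le_antisymm hxy huv
    simp [add_self_eq_zero_of_zmod_two]
  · subst hyu
    exact Or.inr ⟨x, v, lt_of_le_of_ne (hxy.trans huv) (Ne.symm hvx), by simp [hvx]⟩
  · subst hvx
    exact Or.inr ⟨u, y, lt_of_le_of_ne (huv.trans hxy) fun h => hyu h.symm, by simp [hyu]⟩
  · simp [hyu, hvx]

theorem lie_mem_matrixUnits {b b' : IncidenceAlgebra (ZMod 2) X}
    (hb : b ∈ matrixUnits X (ZMod 2)) (hb' : b' ∈ matrixUnits X (ZMod 2)) :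
    ⁅b, b'⁆ = 0 ∨ ∃ a c, a < c ∧ ⁅b, b'⁆ = single (ZMod 2) a c := by
  obtain rfl | ⟨x, y, hxy, rfl⟩ := hb
  · exact Or.inl (zero_lie b')
  obtain rfl | ⟨u, v, huv, rfl⟩ := hb'
  · exact Or.inl (lie_zero _)
  exact lie_single_single_eq_zero_or hxy huv

theorem isIdempotentElem_single_source_add (hxy : x < y) :
    IsIdempotentElem (single (ZMod 2) x x + single (ZMod 2) x y) :=
  (isIdempotentElem_single_self _ x).add_of_lie_eq_self (single_mul_self _ hxy)
    (by simp [lie_single_single, hxy.le, hxy.ne'])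

theorem isIdempotentElem_single_target_add (hxy : x < y) :
    IsIdempotentElem (single (ZMod 2) y y + single (ZMod 2) x y) :=
  (isIdempotentElem_single_self _ y).add_of_lie_eq_self (single_mul_self _ hxy)
    (by simp [lie_single_single, hxy.le, hxy.ne'])

section Preserver

variable {φ : IncidenceAlgebra (ZMod 2) X →+ IncidenceAlgebra (ZMod 2) X}
  (hφ : ∀ f, IsIdempotentElem f → IsIdempotentElem (φ f))
include hφ

theorem lie_map_single_self (x u : X) :
    ⁅φ (single (ZMod 2) x x), φ (single (ZMod 2) u u)⁆ = 0 := by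
  obtain rfl | hxu := eq_or_ne x u
  · exact lie_self _
  have hsum := (isIdempotentElem_single_self (ZMod 2) x).add_of_lie_eq_zero
    (isIdempotentElem_single_self (ZMod 2) u) (by simp [lie_single_single, hxu, hxu.symm])
  rw [lie_map_eq_idemDefect hφ (isIdempotentElem_single_self (ZMod 2) x) hsum,
    idemDefect_eq_zero.2 (hφ _ (isIdempotentElem_single_self (ZMod 2) u))]

theorem lie_map_single_self_single_of_ne (hxy : x < y) (hzx : z ≠ x) (hzy : z ≠ y) :
    ⁅φ (single (ZMod 2) z z), φ (single (ZMod 2) x y)⁆ = 0 := by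
  have hsum := (isIdempotentElem_single_source_add hxy).add_of_lie_eq_zero
    (isIdempotentElem_single_self _ z)
    (by simp [lie_single_single, add_lie, hxy.le, hzx, Ne.symm hzx, Ne.symm hzy])
  have h := lie_map_eq_idemDefect hφ (isIdempotentElem_single_source_add hxy) hsum
  rw [idemDefect_eq_zero.2 (hφ _ (isIdempotentElem_single_self _ z)), map_add, add_lie,
    lie_map_single_self hφ, zero_add] at h
  rw [lie_comm_of_zmod_two, h]

theorem lie_map_single_self_single (hxy : x ≤ y) (z : X) :
    ⁅φ (single (ZMod 2) z z), φ (single (ZMod 2) x y)⁆ =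
      idemDefect (φ ⁅single (ZMod 2) z z, single (ZMod 2) x y⁆) := by
  obtain rfl | hxy := hxy.eq_or_lt
  · rw [lie_map_single_self hφ, lie_single_single le_rfl le_rfl]
    obtain rfl | hzx := eq_or_ne z x
    · simp [add_self_eq_zero_of_zmod_two]
    · simp [hzx, hzx.symm]
  rw [lie_single_single le_rfl hxy.le]
  by_cases hzx : z = x
  · subst hzx
    simpa [hxy.ne'] using lie_map_eq_idemDefect hφ (isIdempotentElem_single_self _ z)
      (isIdempotentElem_single_source_add hxy)
  by_cases hzy : z = y
  · subst hzy
    simpa [hxy.ne'] using lie_map_eq_idemDefect hφ (isIdempotentElem_single_self _ z)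
      (isIdempotentElem_single_target_add hxy)
  simp [lie_map_single_self_single_of_ne hφ hxy hzx hzy, hzx, Ne.symm hzy]

theorem lie_map_single_single_of_source_eq (hxy : x < y) (hxv : x < v) :
    ⁅φ (single (ZMod 2) x y), φ (single (ZMod 2) x v)⁆ = 0 := by
  have hsum := (isIdempotentElem_single_source_add hxy).add_of_lie_eq_self
    (single_mul_self _ hxv)
    (by simp [lie_single_single, add_lie, hxy.le, hxv.le, hxy.ne', hxv.ne'])
  have h := lie_map_eq_idemDefect hφ (isIdempotentElem_single_source_add hxy) hsum
  rwa [map_add, add_lie, lie_map_eq_idemDefect hφ (isIdempotentElem_single_self _ x)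
    (isIdempotentElem_single_source_add hxv), add_eq_left] at h

theorem lie_map_single_single_of_ne (hxy : x < y) (huv : u < v) (hxu : x ≠ u) (hxv : x ≠ v)
    (hyu : y ≠ u) :
    ⁅φ (single (ZMod 2) x y), φ (single (ZMod 2) u v)⁆ = 0 := by
  have hsum := (isIdempotentElem_single_source_add hxy).add_of_lie_eq_zero
    (isIdempotentElem_single_source_add huv)
    (by simp [lie_single_single, add_lie, lie_add, hxy.le, huv.le, hxu, hxu.symm, hxv.symm,
      hyu])
  have h := lie_map_eq_idemDefect hφ (isIdempotentElem_single_source_add hxy) hsum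
  rwa [idemDefect_eq_zero.2 (hφ _ (isIdempotentElem_single_source_add huv)), map_add, map_add,
    add_lie, lie_add, lie_add, lie_map_single_self hφ,
    lie_map_single_self_single_of_ne hφ huv hxu hxv, lie_comm_of_zmod_two (φ (single (ZMod 2) x y)),
    lie_map_single_self_single_of_ne hφ hxy hxu.symm hyu.symm, zero_add, zero_add, zero_add] at h

theorem lie_map_single_single_trans (hxy : x < y) (hyv : y < v) :
    ⁅φ (single (ZMod 2) x y), φ (single (ZMod 2) y v)⁆ = idemDefect (φ (single (ZMod 2) x v)) := by
  have hxv := hxy.trans hyv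
  have hsum := (isIdempotentElem_single_target_add hxy).add_of_lie_eq_self
    (a := single (ZMod 2) y v + single (ZMod 2) x v)
    (by simp [add_mul, mul_add, single_mul_single, hyv.le, hxv.le, hyv.ne', hxv.ne'])
    (by simp [lie_single_single, add_lie, lie_add, hxy.le, hyv.le, hxv.le, hxy.ne', hyv.ne',
      hxv.ne'])
  have h := lie_map_eq_idemDefect hφ (isIdempotentElem_single_target_add hxy) hsum
  rw [map_add, map_add, add_lie, lie_add, lie_add, idemDefect_add,
    lie_map_eq_idemDefect hφ (isIdempotentElem_single_self _ y)
      (isIdempotentElem_single_source_add hyv),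
    lie_map_single_self_single_of_ne hφ hxv hxy.ne' hyv.ne,
    lie_map_single_single_of_source_eq hφ hxy hxv,
    lie_map_single_single_of_ne hφ hyv hxv hxy.ne' hyv.ne hxv.ne'] at h
  simpa only [add_zero, add_right_inj] using h

theorem lie_map_single_single_of_lt (hxy : x < y) (huv : u < v) :
    ⁅φ (single (ZMod 2) x y), φ (single (ZMod 2) u v)⁆ =
      idemDefect (φ ⁅single (ZMod 2) x y, single (ZMod 2) u v⁆) := by
  rw [lie_single_single hxy.le huv.le]
  by_cases hyu : y = u
  · subst hyu
    rw [if_pos rfl, if_neg (hxy.trans huv).ne', add_zero]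
    exact lie_map_single_single_trans hφ hxy huv
  by_cases hvx : v = x
  · subst hvx
    rw [if_neg hyu, if_pos rfl, zero_add, lie_comm_of_zmod_two]
    exact lie_map_single_single_trans hφ huv hxy
  rw [if_neg hyu, if_neg hvx, add_zero, map_zero, idemDefect_zero]
  obtain rfl | hxu := eq_or_ne x u
  · exact lie_map_single_single_of_source_eq hφ hxy huv
  · exact lie_map_single_single_of_ne hφ hxy huv hxu (Ne.symm hvx) hyu

theorem lie_map_single_single (hxy : x ≤ y) (huv : u ≤ v) :
    ⁅φ (single (ZMod 2) x y), φ (single (ZMod 2) u v)⁆ =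
      idemDefect (φ ⁅single (ZMod 2) x y, single (ZMod 2) u v⁆) := by
  obtain rfl | hxy := hxy.eq_or_lt
  · exact lie_map_single_self_single hφ huv x
  obtain rfl | huv := huv.eq_or_lt
  · rw [lie_comm_of_zmod_two, lie_comm_of_zmod_two (single (ZMod 2) x y)]
    exact lie_map_single_self_single hφ hxy.le u
  · exact lie_map_single_single_of_lt hφ hxy huv

theorem lie_map_eq_idemDefect_of_mem_matrixUnits {b b' : IncidenceAlgebra (ZMod 2) X}
    (hb : b ∈ matrixUnits X (ZMod 2)) (hb' : b' ∈ matrixUnits X (ZMod 2)) :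
    ⁅φ b, φ b'⁆ = idemDefect (φ ⁅b, b'⁆) := by
  obtain rfl | ⟨x, y, hxy, rfl⟩ := hb
  · simp
  obtain rfl | ⟨u, v, huv, rfl⟩ := hb'
  · simp
  exact lie_map_single_single hφ hxy huv

theorem map_lie_sub_lie_mem_center [Fintype X] (hφs : Function.Surjective φ)
    (f g : IncidenceAlgebra (ZMod 2) X) : φ ⁅f, g⁆ - ⁅φ f, φ g⁆ ∈ Set.center _ := by
  refine _root_.map_lie_sub_lie_mem_center closure_matrixUnits hφs (fun b hb b' hb' => ?_)
    (fun b hb b' hb' => lie_map_eq_idemDefect_of_mem_matrixUnits hφ hb hb')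
    (fun b hb b' hb' => ?_) f g
  · obtain h | ⟨a, c, hac, h⟩ := lie_mem_matrixUnits hb hb'
    · exact h ▸ Set.mem_insert _ _
    · exact h ▸ Or.inr ⟨a, c, hac.le, rfl⟩
  · obtain h | ⟨a, c, hac, h⟩ := lie_mem_matrixUnits hb hb'
    · rw [h, zero_mul]
    · rw [h, single_mul_self _ hac]

end Preserver

theorem exists_lie_correction [Fintype X] (hX : PosetConnected X)
    {φ : IncidenceAlgebra (ZMod 2) X →+ IncidenceAlgebra (ZMod 2) X} (hφ : Function.Bijective φ)
    (hE : ∀ f, IsIdempotentElem f → IsIdempotentElem (φ f)) :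
    ∃ ψ : IncidenceAlgebra (ZMod 2) X →+ IncidenceAlgebra (ZMod 2) X, Function.Bijective ψ ∧
      (∀ f g, ψ ⁅f, g⁆ = ⁅ψ f, ψ g⁆) ∧ ∀ f, φ f - ψ f ∈ Set.center _ := by
  obtain hempty | ⟨⟨x⟩⟩ := isEmpty_or_nonempty X
  · have : Subsingleton (IncidenceAlgebra (ZMod 2) X) := ⟨fun f g => ext fun a => isEmptyElim a⟩
    exact ⟨φ, hφ, fun _ _ => Subsingleton.elim _ _, fun f => by simp⟩
  obtain ⟨p, hp, hp1⟩ := exists_isIdempotentElem_map_eq hφ.1 hE IsIdempotentElem.one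
  have hp0 : p ≠ 0 := by
    rintro rfl
    simpa using congrArg (fun f => f x x) hp1
  -- Evaluating at a diagonal entry where `p = φ⁻¹ 1` is nonzero keeps the correction injective.
  obtain ⟨x₀, hx₀⟩ := exists_apply_self_ne_zero_of_isIdempotentElem hp hp0
  have hℓ (c : ZMod 2) : applyAddMonoidHom x₀ x₀ (algebraMap (ZMod 2) _ c) = c := by
    simp [applyAddMonoidHom, algebraMap_apply]
  have hφℓ (f) (c : ZMod 2) (hf : φ f = algebraMap (ZMod 2) _ c) :
      applyAddMonoidHom x₀ x₀ f = c := by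
    obtain rfl | rfl := ZMod.eq_zero_or_eq_one c
    · rw [map_zero, ← map_zero φ] at hf
      simp [hφ.1 hf, applyAddMonoidHom]
    · rw [map_one, ← hp1] at hf
      exact hφ.1 hf ▸ (ZMod.eq_zero_or_eq_one _).resolve_left hx₀
  refine ⟨lieCorrection φ (applyAddMonoidHom x₀ x₀),
    Finite.injective_iff_bijective.1 (lieCorrection_injective hφ.1 hℓ hφℓ),
    lieCorrection_lie (fun f g => lie_apply_self f g x₀)
      (fun z hz => eq_algebraMap_of_mem_center hX hz x₀)
      (map_lie_sub_lie_mem_center hE hφ.2),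
    fun f => sub_lieCorrection_mem_center f⟩

end IncidenceAlgebra

/-- a bijective additive map on the incidence algebra of a finite connected
poset over `ℤ₂` preserves idempotents iff it is the composition of a bijective shift map and
a Lie automorphism. -/
theorem stmt_12 {X : Type*} [PartialOrder X] [Fintype X] [LocallyFiniteOrder X] [DecidableEq X]
    (hconn : PosetConnected X)
    (φ : IncidenceAlgebra (ZMod 2) X → IncidenceAlgebra (ZMod 2) X)
    (hadd : ∀ f g, φ (f + g) = φ f + φ g)
    (hbij : Function.Bijective φ) :
    (∀ f : IncidenceAlgebra (ZMod 2) X, f * f = f → φ f * φ f = φ f) ↔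
      ∃ τ ψ : IncidenceAlgebra (ZMod 2) X → IncidenceAlgebra (ZMod 2) X,
        (∀ f g, τ (f + g) = τ f + τ g) ∧
        (∀ f, τ f - f ∈ Set.center (IncidenceAlgebra (ZMod 2) X)) ∧
        Function.Bijective τ ∧
        (∀ f g, ψ (f + g) = ψ f + ψ g) ∧
        Function.Bijective ψ ∧
        (∀ f g, ψ (f * g - g * f) = ψ f * ψ g - ψ g * ψ f) ∧
        φ = τ ∘ ψ := by
  constructor
  · intro hE
    obtain ⟨ψ, hψ, hψlie, hφψ⟩ :=
      exists_lie_correction hconn (φ := AddMonoidHom.mk' φ hadd) hbij hE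
    obtain ⟨τ, hτ, hτshift, hφτ⟩ := exists_shift_comp (φ := AddMonoidHom.mk' φ hadd) hbij hψ hφψ
    exact ⟨τ, ψ, map_add τ, hτshift, hτ, map_add ψ, hψ, fun f g => by
      simpa only [Ring.lie_def] using hψlie f g, hφτ⟩
  · rintro ⟨τ, ψ, -, hτshift, -, -, hψ, hψlie, rfl⟩ f hf
    exact IsIdempotentElem.shift_comp_lie (fun f => idemDefect_eq_zero_of_mem_center) hτshift
      hψ.2 (fun f g => by simpa only [Ring.lie_def] using hψlie f g) hf
end

section
/- Let R and S be rings such that S is both 2-torsion-free and 3-torsion-free, and let φ: R → S be an additive map that preserves tripotents (φ(a)³ = φ(a) whenever a³ = a). If a, b ∈ R are orthogonal tripotents (a³ = a, b³ = b, ab = ba = 0), then φ(a) and φ(b) are orthogonal tripotents of S, i.e. φ(a)φ(b) = φ(b)φ(a) = 0. -/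
/-!
Since `a` and `b` are orthogonal, `a + b` and `a - b` are tripotents, hence so are
`φ a + φ b` and `φ a - φ b`. Comparing the cubes of `x ± y` for `x = φ a`, `y = φ b` and dividing
by 2 gives `x²y + xyx + yx² = 0`; multiplying this on either side by `x` and subtracting shows that
`x` and `y` commute, after which it reads `3 x²y = 0`, so `xy = x³y = 0`.
-/

section Orthogonal

variable {R : Type*} [Ring R] {a b : R}

theorem add_pow_three_of_mul_eq_zero (hab : a * b = 0) (hba : b * a = 0) :
    (a + b) ^ 3 = a ^ 3 + b ^ 3 := by
  have e : (a + b) ^ 3 = a ^ 3 + b ^ 3 + a * (a * b) + a * b * a + b * a * a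
      + a * b * b + b * (a * b) + b * (b * a) := by noncomm_ring
  simp [e, hab, hba]

theorem sub_pow_three_of_mul_eq_zero (hab : a * b = 0) (hba : b * a = 0) :
    (a - b) ^ 3 = a ^ 3 - b ^ 3 := by
  have h := add_pow_three_of_mul_eq_zero (a := a) (b := -b) (by simp [hab]) (by simp [hba])
  rwa [← sub_eq_add_neg, Odd.neg_pow (by decide), ← sub_eq_add_neg] at h

end Orthogonal

section Tripotent

variable {S : Type*} [Ring S] {x y : S}

theorem sq_mul_add_mul_mul_add_mul_sq_eq_zero (h2 : ∀ s : S, 2 • s = 0 → s = 0)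
    (hy : y ^ 3 = y) (hsum : (x + y) ^ 3 = x + y) (hdiff : (x - y) ^ 3 = x - y) :
    x ^ 2 * y + x * y * x + y * x ^ 2 = 0 := by
  refine h2 _ ?_
  have e : 2 • (x ^ 2 * y + x * y * x + y * x ^ 2)
      = (x + y) ^ 3 - (x - y) ^ 3 - 2 • y ^ 3 := by noncomm_ring
  rw [e, hsum, hdiff, hy]
  abel

theorem commute_of_sq_mul_add_mul_mul_add_mul_sq_eq_zero (hx : x ^ 3 = x)
    (h : x ^ 2 * y + x * y * x + y * x ^ 2 = 0) : Commute x y := by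
  have e : x * (x ^ 2 * y + x * y * x + y * x ^ 2) - (x ^ 2 * y + x * y * x + y * x ^ 2) * x
      = x ^ 3 * y - y * x ^ 3 := by noncomm_ring
  rw [h, hx, mul_zero, zero_mul, sub_zero] at e
  exact sub_eq_zero.mp e.symm

theorem mul_eq_zero_of_commute_of_sq_mul_add_mul_mul_add_mul_sq_eq_zero
    (h3 : ∀ s : S, 3 • s = 0 → s = 0) (hx : x ^ 3 = x) (hxy : Commute x y)
    (h : x ^ 2 * y + x * y * x + y * x ^ 2 = 0) : x * y = 0 := by
  have hx2y : x ^ 2 * y = 0 := by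
    have hxyx : x * y * x = x ^ 2 * y := by rw [mul_assoc, ← hxy.eq, ← mul_assoc, sq]
    rw [hxyx, ← (hxy.pow_left 2).eq] at h
    exact h3 _ (by rw [← h]; abel)
  rw [← hx, pow_succ', mul_assoc, hx2y, mul_zero]

theorem mul_eq_zero_of_add_pow_three_of_sub_pow_three (h2 : ∀ s : S, 2 • s = 0 → s = 0)
    (h3 : ∀ s : S, 3 • s = 0 → s = 0) (hx : x ^ 3 = x) (hy : y ^ 3 = y)
    (hsum : (x + y) ^ 3 = x + y) (hdiff : (x - y) ^ 3 = x - y) :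
    x * y = 0 ∧ y * x = 0 := by
  have h := sq_mul_add_mul_mul_add_mul_sq_eq_zero h2 hy hsum hdiff
  have hxy := commute_of_sq_mul_add_mul_mul_add_mul_sq_eq_zero hx h
  have hxy0 := mul_eq_zero_of_commute_of_sq_mul_add_mul_mul_add_mul_sq_eq_zero h3 hx hxy h
  exact ⟨hxy0, hxy.eq ▸ hxy0⟩

end Tripotent

/-- an additive tripotent preserver into a 2- and 3-torsion-free ring maps
orthogonal tripotents to orthogonal tripotents. -/
theorem stmt_13 {R S : Type*} [Ring R] [Ring S]
    (h2 : ∀ s : S, 2 • s = 0 → s = 0) (h3 : ∀ s : S, 3 • s = 0 → s = 0)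
    (φ : R → S)
    (hadd : ∀ a b : R, φ (a + b) = φ a + φ b)
    (htri : ∀ a : R, a ^ 3 = a → (φ a) ^ 3 = φ a)
    {a b : R} (ha : a ^ 3 = a) (hb : b ^ 3 = b) (hab : a * b = 0) (hba : b * a = 0) :
    φ a * φ b = 0 ∧ φ b * φ a = 0 := by
  have hsum : (φ a + φ b) ^ 3 = φ a + φ b := by
    rw [← hadd]
    exact htri _ (by rw [add_pow_three_of_mul_eq_zero hab hba, ha, hb])
  have hdiff : (φ a - φ b) ^ 3 = φ a - φ b := by
    have hsub : φ (a - b) = φ a - φ b := map_sub (AddMonoidHom.mk' φ hadd) a b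
    rw [← hsub]
    exact htri _ (by rw [sub_pow_three_of_mul_eq_zero hab hba, ha, hb])
  exact mul_eq_zero_of_add_pow_three_of_sub_pow_three h2 h3 (htri a ha) (htri b hb) hsum hdiff
end

section
/- Let A and B be unital associative algebras over a commutative unital ring R and let φ: A → B be a Jordan triple isomorphism, i.e. a bijective R-linear map with φ(aba) = φ(a)φ(b)φ(a) for all a, b ∈ A. Then u = φ(1) is a central element of B satisfying u² = 1, and φ(ab + ba) = φ(a)·u·φ(b) + φ(b)·u·φ(a) for all a, b ∈ A. -/
/-!
Specialising the triple identity to `a = 1` gives `φ b = u φ(b) u` with `u = φ 1`. Taking `b` with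
`φ b = 1` (surjectivity) yields `u² = 1`, and then `u φ(b) = u² φ(b) u = φ(b) u`, so `u` is central
since `φ` is onto. Polarising the identity `φ(a·1·a) = φ a · u · φ a` at `a + b` gives the formula
for the Jordan product `ab + ba`.
-/

def IsJordanTripleMap {A B : Type*} [Mul A] [Mul B] (f : A → B) : Prop :=
  ∀ a b : A, f (a * b * a) = f a * f b * f a

namespace IsJordanTripleMap

section Monoid

variable {A B : Type*} [Monoid A] [Monoid B] {f : A → B}

theorem map_eq_map_one_mul_mul_map_one (hf : IsJordanTripleMap f) (a : A) :
    f a = f 1 * f a * f 1 := by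
  simpa using hf 1 a

theorem map_one_mul_map_one (hf : IsJordanTripleMap f) (hsurj : Function.Surjective f) :
    f 1 * f 1 = 1 := by
  obtain ⟨c, hc⟩ := hsurj 1
  simpa [hc] using (hf.map_eq_map_one_mul_mul_map_one c).symm

theorem map_one_mul_comm (hf : IsJordanTripleMap f) (hsurj : Function.Surjective f) (b : B) :
    f 1 * b = b * f 1 := by
  obtain ⟨a, rfl⟩ := hsurj b
  calc f 1 * f a = f 1 * (f 1 * f a * f 1) := by rw [← hf.map_eq_map_one_mul_mul_map_one]
    _ = (f 1 * f 1) * f a * f 1 := by simp only [mul_assoc]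
    _ = f a * f 1 := by rw [hf.map_one_mul_map_one hsurj, one_mul]

end Monoid

theorem map_mul_add_mul_comm {A B F : Type*} [Ring A] [Ring B] [FunLike F A B]
    [AddHomClass F A B] {f : F} (hf : IsJordanTripleMap f) (a b : A) :
    f (a * b + b * a) = f a * f 1 * f b + f b * f 1 * f a := by
  have polarized := hf (a + b) 1
  rw [show (a + b) * 1 * (a + b) = a * 1 * a + (a * b + b * a) + b * 1 * b by noncomm_ring,
    map_add f (_ + _), map_add f (a * 1 * a), hf a 1, hf b 1, map_add f a b] at polarized
  calc f (a * b + b * a)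
      = (f a + f b) * f 1 * (f a + f b) - f a * f 1 * f a - f b * f 1 * f b := by
        rw [← polarized]; abel
    _ = f a * f 1 * f b + f b * f 1 * f a := by noncomm_ring

end IsJordanTripleMap

/-- if `φ` is a Jordan triple isomorphism between unital associative algebras,
then `u = φ(1)` is central, `u² = 1`, and `φ(ab + ba) = φ(a)·u·φ(b) + φ(b)·u·φ(a)`. -/
theorem stmt_15 {R A B : Type*} [CommRing R] [Ring A] [Ring B] [Algebra R A] [Algebra R B]
    (φ : A →ₗ[R] B)
    (hbij : Function.Bijective φ)
    (htriple : ∀ a b : A, φ (a * b * a) = φ a * φ b * φ a) :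
    (∀ b : B, φ 1 * b = b * φ 1) ∧ φ 1 * φ 1 = 1 ∧
      ∀ a b : A, φ (a * b + b * a) = φ a * φ 1 * φ b + φ b * φ 1 * φ a := by
  have hφ : IsJordanTripleMap φ := htriple
  exact ⟨hφ.map_one_mul_comm hbij.surjective, hφ.map_one_mul_map_one hbij.surjective,
    hφ.map_mul_add_mul_comm⟩
end

section
/- Let k ≥ 3 be an integer and F a field admitting a primitive (k−1)-th root of unity. Let A and B be associative F-algebras and φ: A → B an F-linear map preserving k-potents (φ(a)^k = φ(a) whenever a^k = a). If a, b ∈ A are orthogonal k-potents (a^k = a, b^k = b, ab = ba = 0), then φ(a) and φ(b) are commuting k-potents of B. If moreover char(F) does not divide k, then φ(a) and φ(b) are orthogonal: φ(a)φ(b) = φ(b)φ(a) = 0. -/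
/-!
Put `x = φ a`, `y = φ b` and expand `(x + t y)^k = ∑ f_m t^m` in `B[t]`. For every `(k-1)`-th root
of unity `l`, `a + l b` is a `k`-potent, hence `(x + l y)^k = x + l y`. Averaging these identities
against the powers of a primitive `(k-1)`-th root of unity isolates the coefficients with
`m ≡ 1 [MOD k-1]`, namely `m = 1` and `m = k`; as `f_k = y^k = y`, this gives `f_1 = 0`.
Since `x f_1 - f_1 x = x^k y - y x^k = x y - y x`, the images commute, and then `f_1 = k y x^(k-1)`,
so `y x = y x^k = 0` once `k ≠ 0` in `F`.
-/

open Polynomial Finset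

theorem add_pow_succ_of_mul_eq_zero {R : Type*} [Semiring R] {a c : R} (hac : a * c = 0)
    (hca : c * a = 0) (n : ℕ) : (a + c) ^ (n + 1) = a ^ (n + 1) + c ^ (n + 1) := by
  induction n with
  | zero => simp
  | succ n ih =>
    have hac' : a ^ (n + 1) * c = 0 := by rw [pow_succ, mul_assoc, hac, mul_zero]
    have hca' : c ^ (n + 1) * a = 0 := by rw [pow_succ, mul_assoc, hca, mul_zero]
    rw [pow_succ, ih, add_mul, mul_add, mul_add, hac', hca', add_zero, zero_add, ← pow_succ,
      ← pow_succ]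

theorem add_smul_pow_succ_eq_self {F A : Type*} [CommSemiring F] [Semiring A] [Algebra F A]
    {n : ℕ} {a b : A} (ha : a ^ (n + 1) = a) (hb : b ^ (n + 1) = b) (hab : a * b = 0)
    (hba : b * a = 0) {l : F} (hl : l ^ (n + 1) = l) : (a + l • b) ^ (n + 1) = a + l • b := by
  rw [add_pow_succ_of_mul_eq_zero (by rw [mul_smul_comm, hab, smul_zero])
    (by rw [smul_mul_assoc, hba, smul_zero]), ha, _root_.smul_pow, hl, hb]

theorem IsPrimitiveRoot.sum_filter_modEq_eq_zero {F M : Type*} [Field F] [AddCommGroup M]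
    [Module F M] {ζ : F} {n : ℕ} [NeZero n] (hζ : IsPrimitiveRoot ζ n) {s : Finset ℕ}
    {v : ℕ → M} (h : ∀ j, ∑ m ∈ s, (ζ ^ j) ^ m • v m = 0) (r : ℕ) :
    ∑ m ∈ s with m ≡ r [MOD n], v m = 0 := by
  have hζ0 : ζ ≠ 0 := hζ.ne_zero (NeZero.ne n)
  have hgeom : ∀ m, ∑ j ∈ range n, (ζ ^ m * ζ⁻¹ ^ r) ^ j =
      if m ≡ r [MOD n] then (n : F) else 0 := by
    intro m
    have hpow : ζ ^ m = ζ ^ r ↔ m ≡ r [MOD n] := by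
      rw [(hζ.isOfFinOrder (NeZero.ne n)).pow_inj_mod, ← hζ.eq_orderOf]; rfl
    split_ifs with hmr
    · simp [hpow.mpr hmr, hζ0]
    · have hw : ζ ^ m * ζ⁻¹ ^ r ≠ 1 := by
        rwa [inv_pow, ← div_eq_mul_inv, Ne, div_eq_one_iff_eq (pow_ne_zero _ hζ0), hpow]
      have hwn : (ζ ^ m * ζ⁻¹ ^ r) ^ n = 1 := by
        rw [show (ζ ^ m * ζ⁻¹ ^ r) ^ n = (ζ ^ n) ^ m * ((ζ ^ n)⁻¹) ^ r by ring, hζ.pow_eq_one]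
        simp
      rw [geom_sum_eq hw, hwn, sub_self, zero_div]
  have hsmul : (n : F) • ∑ m ∈ s with m ≡ r [MOD n], v m = 0 := by
    calc (n : F) • ∑ m ∈ s with m ≡ r [MOD n], v m
        = ∑ m ∈ s, (if m ≡ r [MOD n] then (n : F) else 0) • v m := by
          rw [smul_sum, sum_filter]; simp only [ite_smul, zero_smul]
      _ = ∑ j ∈ range n, (ζ⁻¹ ^ r) ^ j • ∑ m ∈ s, (ζ ^ j) ^ m • v m := by
          simp_rw [← hgeom, sum_smul, smul_sum, smul_smul]
          rw [sum_comm]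
          refine sum_congr rfl fun j _ => sum_congr rfl fun m _ => ?_
          congr 1; ring
      _ = 0 := by simp [h]
  exact (smul_eq_zero.mp hsmul).resolve_left hζ.neZero'.out

theorem Polynomial.eval_algebraMap_eq_sum_range {F B : Type*} [CommSemiring F] [Semiring B]
    [Algebra F B] {q : B[X]} {N : ℕ} (hq : q.natDegree < N) (l : F) :
    q.eval (algebraMap F B l) = ∑ m ∈ range N, l ^ m • q.coeff m := by
  rw [eval_eq_sum_range' hq]
  refine sum_congr rfl fun m _ => ?_
  rw [← map_pow, ← Algebra.commutes, Algebra.smul_def]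

section Pencil

variable {R : Type*} [Ring R] (x y : R)

theorem natDegree_C_add_C_mul_X_pow_le (n : ℕ) : ((C y * X + C x) ^ n).natDegree ≤ n := by
  simpa using natDegree_pow_le_of_le n (natDegree_linear_le (a := y) (b := x))

theorem coeff_C_add_C_mul_X_pow_zero (n : ℕ) : ((C y * X + C x) ^ n).coeff 0 = x ^ n := by
  induction n with
  | zero => simp
  | succ n ih => rw [pow_succ, mul_coeff_zero, ih, pow_succ]; simp

theorem coeff_C_add_C_mul_X_pow_self (n : ℕ) : ((C y * X + C x) ^ n).coeff n = y ^ n := by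
  simpa using coeff_pow_of_natDegree_le (m := n) (natDegree_linear_le (a := y) (b := x))

theorem coeff_C_add_C_mul_X_pow_succ_one (n : ℕ) :
    ((C y * X + C x) ^ (n + 1)).coeff 1 = ((C y * X + C x) ^ n).coeff 1 * x + x ^ n * y := by
  rw [pow_succ, mul_add, ← mul_assoc, coeff_add, coeff_mul_X, coeff_mul_C, coeff_mul_C,
    coeff_C_add_C_mul_X_pow_zero, add_comm]

theorem mul_coeff_C_add_C_mul_X_pow_one_sub (n : ℕ) :
    x * ((C y * X + C x) ^ n).coeff 1 - ((C y * X + C x) ^ n).coeff 1 * x =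
      x ^ n * y - y * x ^ n := by
  induction n with
  | zero => simp [coeff_one]
  | succ n ih =>
    rw [coeff_C_add_C_mul_X_pow_succ_one]
    calc _ = (x * ((C y * X + C x) ^ n).coeff 1 - ((C y * X + C x) ^ n).coeff 1 * x) * x
          + (x * x ^ n * y - x ^ n * y * x) := by noncomm_ring
      _ = _ := by rw [ih, pow_succ, (Commute.self_pow x n).eq]; noncomm_ring

theorem Commute.coeff_C_add_C_mul_X_pow_one {x y : R} (h : Commute x y) (n : ℕ) :
    ((C y * X + C x) ^ (n + 1)).coeff 1 = (n + 1) • (y * x ^ n) := by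
  induction n with
  | zero => simp
  | succ n ih =>
    rw [coeff_C_add_C_mul_X_pow_succ_one, ih, smul_mul_assoc, mul_assoc, ← pow_succ,
      (h.pow_left _).eq, ← succ_nsmul]

theorem commute_of_coeff_C_add_C_mul_X_pow_one_eq_zero {x y : R} {k : ℕ}
    (hx : x ^ k = x) (h : ((C y * X + C x) ^ k).coeff 1 = 0) : Commute x y := by
  have hcomm := mul_coeff_C_add_C_mul_X_pow_one_sub x y k
  rwa [h, hx, mul_zero, zero_mul, sub_zero, eq_comm, sub_eq_zero] at hcomm

end Pencil

theorem eval_algebraMap_C_add_C_mul_X_pow {F B : Type*} [CommSemiring F] [Ring B] [Algebra F B]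
    (x y : B) (l : F) (n : ℕ) :
    ((C y * X + C x) ^ n).eval (algebraMap F B l) = (x + l • y) ^ n := by
  have h := map_pow (eval₂RingHom' (RingHom.id B) (algebraMap F B l)
    fun b => Algebra.commute_algebraMap_right l b) (C y * X + C x) n
  refine h.trans ?_
  simp [Algebra.smul_def, Algebra.commutes, add_comm]

theorem filter_range_modEq_one {n : ℕ} (hn : 2 ≤ n) :
    {m ∈ range (n + 2) | m ≡ 1 [MOD n]} = {1, n + 1} := by
  ext m
  simp only [mem_filter, mem_range, mem_insert, mem_singleton, Nat.ModEq,
    Nat.mod_eq_of_lt (show 1 < n by omega)]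
  constructor
  · rintro ⟨hm, hmod⟩
    rcases (by omega : m < n ∨ m = n ∨ m = n + 1) with h | rfl | rfl
    · rw [Nat.mod_eq_of_lt h] at hmod; exact Or.inl hmod
    · simp at hmod
    · exact Or.inr rfl
  · rintro (rfl | rfl)
    · exact ⟨by omega, Nat.mod_eq_of_lt (by omega)⟩
    · exact ⟨by omega, by rw [Nat.add_mod_left, Nat.mod_eq_of_lt (by omega)]⟩

theorem coeff_C_add_C_mul_X_pow_one_eq_zero {F B : Type*} [Field F] [Ring B] [Algebra F B]
    {n : ℕ} (hn : 2 ≤ n) {ζ : F} (hζ : IsPrimitiveRoot ζ n) {x y : B} (hy : y ^ (n + 1) = y)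
    (hpencil : ∀ l : F, l ^ n = 1 → (x + l • y) ^ (n + 1) = x + l • y) :
    ((C y * X + C x) ^ (n + 1)).coeff 1 = 0 := by
  have : NeZero n := ⟨by omega⟩
  set p := C y * X + C x
  have hdeg : (p ^ (n + 1) - p).natDegree < n + 2 :=
    (natDegree_sub_le _ _).trans_lt <| max_lt
      ((natDegree_C_add_C_mul_X_pow_le x y _).trans_lt (by omega))
      (natDegree_linear_le.trans_lt (by omega))
  have hvanish : ∀ j, ∑ m ∈ range (n + 2), (ζ ^ j) ^ m • (p ^ (n + 1) - p).coeff m = 0 := by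
    intro j
    have hroot : (ζ ^ j) ^ n = 1 := by rw [← pow_mul, mul_comm, pow_mul, hζ.pow_eq_one, one_pow]
    rw [← eval_algebraMap_eq_sum_range hdeg, eval_sub, eval_algebraMap_C_add_C_mul_X_pow,
      ← pow_one p, eval_algebraMap_C_add_C_mul_X_pow, pow_one, hpencil _ hroot, sub_self]
  have h := hζ.sum_filter_modEq_eq_zero hvanish 1
  rw [filter_range_modEq_one hn, sum_pair (by omega), coeff_sub, coeff_sub, coeff_C_add_C_mul_X_pow_self, hy,
    coeff_eq_zero_of_natDegree_lt (natDegree_linear_le.trans_lt (by omega) : p.natDegree < n + 1)]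
    at h
  simpa [p] using h

theorem Commute.mul_eq_zero_of_coeff_C_add_C_mul_X_pow_one_eq_zero {F R : Type*} [DivisionRing F]
    [Ring R] [Module F R] {x y : R} (hxy : Commute x y) {n : ℕ} (hx : x ^ (n + 1) = x)
    (hn : ((n + 1 : ℕ) : F) ≠ 0) (h : ((C y * X + C x) ^ (n + 1)).coeff 1 = 0) : y * x = 0 := by
  rw [hxy.coeff_C_add_C_mul_X_pow_one, ← Nat.cast_smul_eq_nsmul F] at h
  rw [← hx, pow_succ, ← mul_assoc, (smul_eq_zero.mp h).resolve_left hn, zero_mul]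

/-- for `k ≥ 3` and a field with a primitive `(k−1)`-th root of unity, a linear
`k`-potent preserver maps orthogonal `k`-potents to commuting `k`-potents, and to orthogonal
ones when `char F ∤ k`. -/
theorem stmt_17 (k : ℕ) (hk : 3 ≤ k)
    {F : Type*} [Field F]
    (hroot : ∃ ε : F, ε ^ (k - 1) = 1 ∧ ∀ m : ℕ, 0 < m → m < k - 1 → ε ^ m ≠ 1)
    {A B : Type*} [Ring A] [Ring B] [Algebra F A] [Algebra F B]
    (φ : A →ₗ[F] B)
    (hpres : ∀ a : A, a ^ k = a → (φ a) ^ k = φ a)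
    {a b : A} (ha : a ^ k = a) (hb : b ^ k = b) (hab : a * b = 0) (hba : b * a = 0) :
    (φ a * φ b = φ b * φ a ∧ (φ a) ^ k = φ a ∧ (φ b) ^ k = φ b) ∧
      (¬ ringChar F ∣ k → φ a * φ b = 0 ∧ φ b * φ a = 0) := by
  obtain ⟨n, rfl⟩ : ∃ n, k = n + 1 := ⟨k - 1, by omega⟩
  obtain ⟨ε, hε, hεprim⟩ := hroot
  simp only [Nat.add_sub_cancel] at hε hεprim
  have hζ : IsPrimitiveRoot ε n := .mk_of_lt ε (by omega) hε hεprim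
  have hpencil : ∀ l : F, l ^ n = 1 → (φ a + l • φ b) ^ (n + 1) = φ a + l • φ b := fun l hl => by
    have hl' : l ^ (n + 1) = l := by rw [pow_succ, hl, one_mul]
    simpa using hpres _ (add_smul_pow_succ_eq_self ha hb hab hba hl')
  have hcoeff := coeff_C_add_C_mul_X_pow_one_eq_zero (by omega) hζ (hpres b hb) hpencil
  have hcomm := commute_of_coeff_C_add_C_mul_X_pow_one_eq_zero (hpres a ha) hcoeff
  refine ⟨⟨hcomm.eq, hpres a ha, hpres b hb⟩, fun hchar => ?_⟩
  have hba' := hcomm.mul_eq_zero_of_coeff_C_add_C_mul_X_pow_one_eq_zero (F := F) (hpres a ha)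
    (fun h => hchar (ringChar.dvd h)) hcoeff
  exact ⟨hcomm.eq.trans hba', hba'⟩
end

section
/- Let k ≥ 2 be an integer, X a locally finite poset, and F a field admitting a primitive (k−1)-th root of unity. Then f ∈ I(X,F) satisfies f^k = f if and only if f is conjugate to a diagonal element whose diagonal entries are either zero or (k−1)-th roots of unity; that is, if and only if there exist an invertible σ ∈ I(X,F) and a diagonal element d ∈ I(X,F) with d(x,x) = 0 or d(x,x)^{k−1} = 1 for every x ∈ X, such that f = σ d σ⁻¹. -/
/-!
If `f ^ k = f`, then `f` and its diagonal part `d` are both annihilated by `X ^ k - X`, which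
the primitive root splits into distinct linear factors `X - r`, `r ∈ {0} ∪ μ_{k-1}`. With the
Lagrange idempotents `e_r`, the element `σ = ∑ r, e_r(f) * e_r(d)` satisfies `f * σ = σ * d`,
since `f * e_r(f) = r • e_r(f)` and `e_r(d) * d = r • e_r(d)`. Taking the `(x, x)` entry is an
algebra map, so `σ x x = ∑ r, e_r(c) ^ 2 = 1` for `c = f x x`, and an element of an incidence
algebra with unit diagonal is invertible. The converse is `(σ d σ⁻¹) ^ k = σ d ^ k σ⁻¹`.
-/

open Finset Polynomial

namespace IncidenceAlgebra

section Ring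

variable {𝕜 α : Type*} [Ring 𝕜] [PartialOrder α] [LocallyFiniteOrder α] [DecidableEq α]

private def rightInvFun (f : IncidenceAlgebra 𝕜 α) (b : α) : α → 𝕜
  | a =>
    if a = b then 1
    else
      -∑ x ∈ (Ioc a b).attach,
          let h := mem_Ioc.1 x.2
          have : #(Icc (x : α) b) < #(Icc a b) :=
            card_lt_card (Icc_ssubset_Icc_left (h.1.le.trans h.2) h.1 le_rfl)
          f a x * rightInvFun f b x
termination_by a => #(Icc a b)

private lemma rightInvFun_apply (f : IncidenceAlgebra 𝕜 α) (a b : α) :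
    rightInvFun f b a =
      if a = b then 1 else -∑ x ∈ (Ioc a b).attach, f a x * rightInvFun f b x := by
  rw [rightInvFun]

def rightInv (f : IncidenceAlgebra 𝕜 α) : IncidenceAlgebra 𝕜 α :=
  ⟨fun a b ↦ rightInvFun f b a, fun a b h ↦ by
    rw [rightInvFun_apply, if_neg (fun e ↦ h e.le), Ioc_eq_empty (fun hlt ↦ h hlt.le)]
    simp⟩

lemma rightInv_apply (f : IncidenceAlgebra 𝕜 α) (a b : α) :
    rightInv f a b = if a = b then 1 else -∑ x ∈ Ioc a b, f a x * rightInv f x b := by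
  rw [rightInv, coe_mk, rightInvFun_apply,
    sum_attach (Ioc a b) (fun x ↦ f a x * rightInvFun f b x)]

@[simp] lemma rightInv_apply_self (f : IncidenceAlgebra 𝕜 α) (a : α) :
    rightInv f a a = 1 := by
  simp [rightInv_apply]

lemma mul_rightInv {f : IncidenceAlgebra 𝕜 α} (hf : ∀ x, f x x = 1) : f * rightInv f = 1 := by
  ext a b hab
  rw [mul_apply, Icc_eq_cons_Ioc hab, sum_cons, hf a, one_mul, one_apply]
  rcases eq_or_ne a b with rfl | hne
  · simp
  · rw [rightInv_apply, if_neg hne, if_neg hne, neg_add_cancel]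

lemma isUnit_of_forall_apply_self_eq_one {f : IncidenceAlgebra 𝕜 α} (hf : ∀ x, f x x = 1) :
    IsUnit f := by
  have hfg := mul_rightInv hf
  have hgh := mul_rightInv (rightInv_apply_self f)
  have hfh : f = rightInv (rightInv f) := by
    rw [← one_mul (rightInv (rightInv f)), ← hfg, mul_assoc, hgh, mul_one]
  exact ⟨⟨f, rightInv f, hfg, (congrArg (rightInv f * ·) hfh).trans hgh⟩, rfl⟩

end Ring

section Semiring

variable {𝕜 α : Type*} [Semiring 𝕜] [PartialOrder α] [LocallyFiniteOrder α] [DecidableEq α]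

def diagonal : (α → 𝕜) →+* IncidenceAlgebra 𝕜 α where
  toFun g := ⟨fun a b ↦ if a = b then g a else 0, fun _ _ h ↦ if_neg fun e ↦ h e.le⟩
  map_one' := rfl
  map_mul' g h := by
    ext a b -
    rcases eq_or_ne a b with rfl | hne
    · simp
    · simp [hne, ite_mul]
  map_zero' := by ext; simp
  map_add' g h := by ext; simp [ite_add_ite]

@[simp] lemma diagonal_apply (g : α → 𝕜) (a b : α) :
    diagonal g a b = if a = b then g a else 0 := rfl

lemma eq_diagonal_of_apply_eq_zero_of_ne {d : IncidenceAlgebra 𝕜 α}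
    (hd : ∀ x y, x ≠ y → d x y = 0) : d = diagonal fun x ↦ d x x := by
  ext a b -
  rcases eq_or_ne a b with rfl | hne
  · simp
  · simp [hne, hd a b hne]

lemma pow_eq_self_of_apply_eq_zero_of_ne {d : IncidenceAlgebra 𝕜 α}
    (hd : ∀ x y, x ≠ y → d x y = 0) {k : ℕ} (hk : ∀ x, d x x ^ k = d x x) : d ^ k = d := by
  rw [eq_diagonal_of_apply_eq_zero_of_ne hd, ← map_pow]
  exact congrArg diagonal (funext hk)

end Semiring

section CommSemiring

variable {𝕜 α : Type*} [CommSemiring 𝕜] [PartialOrder α] [LocallyFiniteOrder α]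
  [DecidableEq α]

def diagAlgHom (x : α) : IncidenceAlgebra 𝕜 α →ₐ[𝕜] 𝕜 where
  toFun g := g x x
  map_one' := by simp
  map_mul' g h := by simp
  map_zero' := rfl
  map_add' _ _ := rfl
  commutes' c := by simp [Algebra.algebraMap_eq_smul_one, constSMul_apply]

@[simp] lemma diagAlgHom_apply (x : α) (g : IncidenceAlgebra 𝕜 α) : diagAlgHom x g = g x x :=
  rfl

end CommSemiring

end IncidenceAlgebra

namespace Lagrange

section Basis

variable {F A : Type*} [Field F] [Ring A] [Algebra F A] {ι : Type*} [DecidableEq ι]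
  {s : Finset ι} {v : ι → F} {i : ι}

lemma X_sub_C_mul_basis (hi : i ∈ s) :
    (X - C (v i)) * Lagrange.basis s v i = C (nodalWeight s v i) * nodal s v := by
  rw [basis_eq_prod_sub_inv_mul_nodal_div hi, ← nodal_erase_eq_nodal_div hi, mul_left_comm,
    nodal_eq_mul_nodal_erase hi]

lemma mul_aeval_basis {a : A} (ha : aeval a (nodal s v) = 0) (hi : i ∈ s) :
    a * aeval a (Lagrange.basis s v i) = v i • aeval a (Lagrange.basis s v i) := by
  have h := congrArg (aeval a) (X_sub_C_mul_basis (v := v) hi)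
  rw [map_mul, map_mul, ha, mul_zero, map_sub, aeval_X, aeval_C, sub_mul, sub_eq_zero] at h
  rw [h, Algebra.smul_def]

lemma aeval_basis_mul {a : A} (ha : aeval a (nodal s v) = 0) (hi : i ∈ s) :
    aeval a (Lagrange.basis s v i) * a = v i • aeval a (Lagrange.basis s v i) := by
  rw [← mul_aeval_basis ha hi]
  simpa using ((Commute.all (Lagrange.basis s v i) X).map (aeval (R := F) a)).eq

end Basis

variable {F A B : Type*} [Field F] [DecidableEq F] [Ring A] [Algebra F A] [Ring B]
  [Algebra F B] {s : Finset F}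

noncomputable def intertwiner (s : Finset F) (a b : A) : A :=
  ∑ r ∈ s, aeval a (Lagrange.basis s id r) * aeval b (Lagrange.basis s id r)

lemma mul_intertwiner {a b : A} (ha : aeval a (nodal s id) = 0)
    (hb : aeval b (nodal s id) = 0) :
    a * intertwiner s a b = intertwiner s a b * b := by
  rw [intertwiner, mul_sum, sum_mul]
  refine sum_congr rfl fun r hr ↦ ?_
  rw [← mul_assoc, mul_aeval_basis ha hr, mul_assoc, aeval_basis_mul hb hr, smul_mul_assoc,
    mul_smul_comm]

lemma map_intertwiner (φ : A →ₐ[F] B) (a b : A) :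
    φ (intertwiner s a b) = intertwiner s (φ a) (φ b) := by
  simp only [intertwiner, map_sum, map_mul, aeval_algHom_apply]

lemma intertwiner_self_of_mem {c : F} (hc : c ∈ s) : intertwiner s c c = 1 := by
  rw [intertwiner, sum_eq_single c]
  · have h := eval_basis_self (v := id) (Set.injOn_id _) hc
    rw [id_eq] at h
    rw [coe_aeval_eq_eval, h, mul_one]
  · intro r _ hrc
    simpa [coe_aeval_eq_eval] using eval_basis_of_ne (v := id) hrc hc
  · exact fun hc' ↦ absurd hc hc'

end Lagrange

section RootsOfUnity

lemma pow_succ_eq_self_iff {M : Type*} [MonoidWithZero M] [IsRightCancelMulZero M] {c : M}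
    {n : ℕ} :
    c ^ (n + 1) = c ↔ c = 0 ∨ c ^ n = 1 := by
  rcases eq_or_ne c 0 with rfl | hc
  · simp
  · rw [pow_succ, mul_eq_right₀ hc]
    simp [hc]

variable {R : Type*} [CommRing R] [IsDomain R] [DecidableEq R] {n : ℕ}

lemma mem_insert_zero_nthRootsFinset_iff (hn : 0 < n) {c : R} :
    c ∈ insert 0 (nthRootsFinset n (1 : R)) ↔ c ^ (n + 1) = c := by
  rw [mem_insert, mem_nthRootsFinset hn, pow_succ_eq_self_iff]

lemma nodal_insert_zero_nthRootsFinset (hn : 0 < n) {ζ : R}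
    (hζ : IsPrimitiveRoot ζ n) :
    Lagrange.nodal (insert 0 (nthRootsFinset n (1 : R))) id = X ^ (n + 1) - X := by
  have h0 : (0 : R) ∉ nthRootsFinset n (1 : R) := by
    simp [mem_nthRootsFinset hn, hn.ne']
  rw [Lagrange.nodal_insert_eq_nodal h0, Lagrange.nodal_eq]
  simp only [id, map_zero, sub_zero]
  rw [← X_pow_sub_one_eq_prod hn hζ]
  ring

end RootsOfUnity

open IncidenceAlgebra Lagrange

/-- over a field with a primitive `(k−1)`-th root of unity, `f^k = f` in the
incidence algebra of a locally finite poset iff `f` is conjugate to a diagonal element whose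
entries are zero or `(k−1)`-th roots of unity. -/
theorem stmt_19 (k : ℕ) (hk : 2 ≤ k)
    {X : Type*} [PartialOrder X] [LocallyFiniteOrder X] [DecidableEq X]
    {F : Type*} [Field F]
    (hroot : ∃ ε : F, ε ^ (k - 1) = 1 ∧ ∀ m : ℕ, 0 < m → m < k - 1 → ε ^ m ≠ 1)
    (f : IncidenceAlgebra F X) :
    f ^ k = f ↔
      ∃ (σ : (IncidenceAlgebra F X)ˣ) (d : IncidenceAlgebra F X),
        (∀ x y : X, x ≠ y → d x y = 0) ∧
        (∀ x : X, d x x = 0 ∨ (d x x) ^ (k - 1) = 1) ∧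
        f = (σ : IncidenceAlgebra F X) * d * ((σ⁻¹ : _) : IncidenceAlgebra F X) := by
  classical
  obtain ⟨n, rfl⟩ : ∃ n, k = n + 1 := ⟨k - 1, by omega⟩
  have hn : 0 < n := by omega
  simp only [Nat.add_sub_cancel] at hroot ⊢
  obtain ⟨ε, hε, hε_min⟩ := hroot
  have hs := nodal_insert_zero_nthRootsFinset hn (IsPrimitiveRoot.mk_of_lt ε hn hε hε_min)
  set s := insert 0 (nthRootsFinset n (1 : F))
  have aeval_nodal {g : IncidenceAlgebra F X} (hg : g ^ (n + 1) = g) :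
      aeval g (nodal s id) = 0 := by
    simp [hs, hg]
  constructor
  · intro hf
    have hf_diag (x : X) : f x x ^ (n + 1) = f x x := by
      rw [← diagAlgHom_apply (𝕜 := F), ← map_pow, hf]
    set d := diagonal fun x ↦ f x x
    have hd_off (x y : X) (hxy : x ≠ y) : d x y = 0 := by simp [d, hxy]
    have hd : d ^ (n + 1) = d :=
      pow_eq_self_of_apply_eq_zero_of_ne hd_off (by simpa [d] using hf_diag)
    have hσ : IsUnit (intertwiner s f d) := isUnit_of_forall_apply_self_eq_one fun x ↦ by
      rw [← diagAlgHom_apply (𝕜 := F), map_intertwiner]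
      have hfx : f x x ∈ s := (mem_insert_zero_nthRootsFinset_iff hn).2 (hf_diag x)
      simpa [d] using intertwiner_self_of_mem hfx
    refine ⟨hσ.unit, d, hd_off, fun x ↦ by simpa [d] using pow_succ_eq_self_iff.1 (hf_diag x), ?_⟩
    rw [Units.eq_mul_inv_iff_mul_eq, IsUnit.unit_spec,
      mul_intertwiner (aeval_nodal hf) (aeval_nodal hd)]
  · rintro ⟨σ, d, hd_off, hd_diag, rfl⟩
    rw [Units.conj_pow,
      pow_eq_self_of_apply_eq_zero_of_ne hd_off fun x ↦ pow_succ_eq_self_iff.2 (hd_diag x)]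
end
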